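/- arXiv:2103.17019 — 3 statements merged into one kernel-verified Lean document; each statement's English description precedes it below -/
import Mathlib

section
/- Let b be a connected transient graph over X satisfying the ellipticity condition with constant E > 0, and let G = G(o,·) be its Green's function. Define w_G(x) = 1_o(x) + G(x)^{-1} ∑_{y~x} b(x,y)(G(x)^{1/2} - G(y)^{1/2})². Then for all x ∈ X: w_G(x) ≤ 1_o(x) + G(x)^{-2} ∑_y b(x,y)(G(x)-G(y))², and w_G(x) ≥ 1_o(x) + (1+E^{-1/2})^{-2} G(x)^{-2} ∑_y b(x,y)(G(x)-G(y))². -/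
/-!
Both bounds hold term by term. Factor `G x - G y = (√(G x) - √(G y)) (√(G x) + √(G y))`; the
upper bound is then `G x ≤ (√(G x) + √(G y))²`. For the lower bound, superharmonicity of `G` at `x`
combined with ellipticity gives `E G y ≤ G x` whenever `b x y > 0`, hence
`√(G x) + √(G y) ≤ (1 + E^{-1/2}) √(G x)`.
-/

open Real

lemma sq_sub_eq_sq_sqrt_sub_mul_sq_sqrt_add {a c : ℝ} (ha : 0 ≤ a) (hc : 0 ≤ c) :
    (a - c) ^ 2 = (√a - √c) ^ 2 * (√a + √c) ^ 2 := by
  rw [← mul_pow, mul_comm, ← sq_sub_sq, sq_sqrt ha, sq_sqrt hc]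

lemma mul_sq_sqrt_sub_le_sq_sub {a c : ℝ} (ha : 0 ≤ a) (hc : 0 ≤ c) :
    a * (√a - √c) ^ 2 ≤ (a - c) ^ 2 := by
  have hle : a ≤ (√a + √c) ^ 2 := by
    nlinarith [sq_sqrt ha, sqrt_nonneg a, sqrt_nonneg c]
  rw [sq_sub_eq_sq_sqrt_sub_mul_sq_sqrt_add ha hc, mul_comm]
  gcongr

lemma sq_sub_le_of_mul_le {a c E : ℝ} (hE : 0 < E) (ha : 0 ≤ a) (hc : 0 ≤ c) (hca : E * c ≤ a) :
    (a - c) ^ 2 ≤ (1 + E ^ (-(1:ℝ)/2)) ^ 2 * a * (√a - √c) ^ 2 := by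
  have ht : E ^ (-(1:ℝ)/2) = (√E)⁻¹ := by
    rw [sqrt_eq_rpow, ← rpow_neg hE.le]
    norm_num
  have hsqrt : √c ≤ (√E)⁻¹ * √a := by
    rw [le_inv_mul_iff₀ (sqrt_pos.mpr hE), ← sqrt_mul hE.le]
    exact sqrt_le_sqrt hca
  have hadd : (√a + √c) ^ 2 ≤ (1 + E ^ (-(1:ℝ)/2)) ^ 2 * a := by
    rw [← sq_sqrt ha, ← mul_pow, sq_sqrt ha, ht]
    gcongr
    linarith
  rw [sq_sub_eq_sq_sqrt_sub_mul_sq_sqrt_add ha hc, mul_comm]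
  gcongr

lemma mul_le_of_superharmonic_of_le_mul_tsum {X : Type*} {w g : X → ℝ} {a E : ℝ}
    (hw : 0 ≤ w) (hg : 0 ≤ g) (hE : 0 ≤ E) (ha : 0 ≤ a)
    (hw_sum : Summable w) (hwg_sum : Summable fun z => w z * g z)
    (hsuper : 0 ≤ ∑' z, w z * (a - g z)) {y : X} (hy : 0 < w y)
    (hell : E * ∑' z, w z ≤ w y) : E * g y ≤ a := by
  have hwg : ∑' z, w z * g z ≤ (∑' z, w z) * a := by
    rw [← tsum_mul_right, ← sub_nonneg, ← (hw_sum.mul_right a).tsum_sub hwg_sum]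
    simpa only [mul_sub] using hsuper
  have hwy : w y * g y ≤ ∑' z, w z * g z :=
    hwg_sum.le_tsum y fun z _ => mul_nonneg (hw z) (hg z)
  refine le_of_mul_le_mul_left ?_ hy
  calc w y * (E * g y) = E * (w y * g y) := by ring
    _ ≤ E * ((∑' z, w z) * a) := mul_le_mul_of_nonneg_left (hwy.trans hwg) hE
    _ = (E * ∑' z, w z) * a := by ring
    _ ≤ w y * a := by gcongr

theorem stmt_4_general {X : Type*} [DecidableEq X] (b : X → X → ℝ)
    (hb_nonneg : ∀ x y, 0 ≤ b x y)
    (E : ℝ) (hE : 0 < E)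
    (hdeg : ∀ x, Summable (fun z => b x z))
    (hell : ∀ x y, 0 < b x y → E * ∑' z, b x z ≤ b x y)
    (o : X) (G : X → ℝ)
    (hGpos : ∀ x, 0 < G x)
    (hGsum : ∀ x, Summable (fun z => b x z * G z))
    (hL : ∀ x, (∑' z, b x z * (G x - G z)) = if x = o then 1 else 0)
    (hsq : ∀ x, Summable (fun y => b x y * (G x - G y) ^ 2)) :
    ∀ x : X,
      ((if x = o then (1:ℝ) else 0) +
          (G x)⁻¹ * ∑' y, b x y * (Real.sqrt (G x) - Real.sqrt (G y)) ^ 2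
        ≤ (if x = o then (1:ℝ) else 0) + ((G x) ^ 2)⁻¹ * ∑' y, b x y * (G x - G y) ^ 2) ∧
      ((if x = o then (1:ℝ) else 0) +
          ((1 + E ^ (-(1:ℝ)/2)) ^ 2)⁻¹ * ((G x) ^ 2)⁻¹ * ∑' y, b x y * (G x - G y) ^ 2
        ≤ (if x = o then (1:ℝ) else 0) +
          (G x)⁻¹ * ∑' y, b x y * (Real.sqrt (G x) - Real.sqrt (G y)) ^ 2) := by
  intro x
  have hGx := hGpos x
  have hG : 0 ≤ G := fun y => (hGpos y).le
  set C := (1 + E ^ (-(1:ℝ)/2)) ^ 2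
  set s := fun y => b x y * (√(G x) - √(G y)) ^ 2 with hs_def
  set q := fun y => b x y * (G x - G y) ^ 2 with hq_def
  have hupper (y : X) : G x * s y ≤ q y := by
    rw [mul_left_comm]
    exact mul_le_mul_of_nonneg_left (mul_sq_sqrt_sub_le_sq_sub hGx.le (hG y)) (hb_nonneg x y)
  have hlower (y : X) : q y ≤ C * G x * s y := by
    rcases (hb_nonneg x y).eq_or_lt with hb0 | hby
    · simp [hs_def, hq_def, ← hb0]
    have hsuper : 0 ≤ ∑' z, b x z * (G x - G z) := by
      rw [hL x]; split_ifs <;> norm_num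
    have hGy := mul_le_of_superharmonic_of_le_mul_tsum (hb_nonneg x) hG hE.le hGx.le (hdeg x)
      (hGsum x) hsuper hby (hell x y hby)
    rw [mul_left_comm]
    exact mul_le_mul_of_nonneg_left (sq_sub_le_of_mul_le hE hGx.le (hG y) hGy) (hb_nonneg x y)
  have hs : Summable s :=
    .of_nonneg_of_le (fun y => mul_nonneg (hb_nonneg x y) (sq_nonneg _))
      (fun y => (le_inv_mul_iff₀ hGx).2 (hupper y)) ((hsq x).mul_left (G x)⁻¹)
  have hS_upper : G x * ∑' y, s y ≤ ∑' y, q y := by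
    rw [← tsum_mul_left]; exact (hs.mul_left _).tsum_le_tsum hupper (hsq x)
  have hS_lower : ∑' y, q y ≤ C * G x * ∑' y, s y := by
    rw [← tsum_mul_left]; exact (hsq x).tsum_le_tsum hlower (hs.mul_left _)
  have hC : 0 < C := by positivity
  refine ⟨add_le_add_right ?_ _, add_le_add_right ?_ _⟩
  · calc (G x)⁻¹ * ∑' y, s y = (G x ^ 2)⁻¹ * (G x * ∑' y, s y) := by field_simp
      _ ≤ (G x ^ 2)⁻¹ * ∑' y, q y := by gcongr
  · calc C⁻¹ * (G x ^ 2)⁻¹ * ∑' y, q y ≤ C⁻¹ * (G x ^ 2)⁻¹ * (C * G x * ∑' y, s y) := by gcongr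
      _ = (G x)⁻¹ * ∑' y, s y := by field_simp

/-- Pointwise upper and lower bounds for the supersolution Hardy weight
`w_G x = 1_o x + (G x)⁻¹ * ∑_y b x y (√(G x) - √(G y))²` in terms of the
squared discrete derivative of the Green's function. -/
theorem stmt_4 {X : Type*} [Countable X] [DecidableEq X] (b : X → X → ℝ)
    (hb_nonneg : ∀ x y, 0 ≤ b x y)
    (hb_symm : ∀ x y, b x y = b y x)
    (hb_diag : ∀ x, b x x = 0)
    (hconn : ∀ x y : X, x ≠ y → ∃ (n : ℕ) (c : Fin (n + 1) → X),
      c 0 = x ∧ c (Fin.last n) = y ∧ ∀ i : Fin n, 0 < b (c i.castSucc) (c i.succ))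
    (E : ℝ) (hE : 0 < E)
    (hdeg : ∀ x, Summable (fun z => b x z))
    (hell : ∀ x y, 0 < b x y → E * ∑' z, b x z ≤ b x y)
    (o : X) (G : X → ℝ)
    (hGpos : ∀ x, 0 < G x)
    (hGsum : ∀ x, Summable (fun z => b x z * G z))
    (hL : ∀ x, (∑' z, b x z * (G x - G z)) = if x = o then 1 else 0)
    (hsq : ∀ x, Summable (fun y => b x y * (G x - G y) ^ 2)) :
    ∀ x : X,
      ((if x = o then (1:ℝ) else 0) +
          (G x)⁻¹ * ∑' y, b x y * (Real.sqrt (G x) - Real.sqrt (G y)) ^ 2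
        ≤ (if x = o then (1:ℝ) else 0) + ((G x) ^ 2)⁻¹ * ∑' y, b x y * (G x - G y) ^ 2) ∧
      ((if x = o then (1:ℝ) else 0) +
          ((1 + E ^ (-(1:ℝ)/2)) ^ 2)⁻¹ * ((G x) ^ 2)⁻¹ * ∑' y, b x y * (G x - G y) ^ 2
        ≤ (if x = o then (1:ℝ) else 0) +
          (G x)⁻¹ * ∑' y, b x y * (Real.sqrt (G x) - Real.sqrt (G y)) ^ 2) :=
  stmt_4_general b hb_nonneg E hE hdeg hell o G hGpos hGsum hL hsq
end

section
/- Suppose b is a connected transient graph over X satisfying the ellipticity condition, with proper Green's function, and suppose the supersolution Hardy weight w_G satisfies w_G(x) ≤ C/(1+‖x‖^p) for all x ∈ X (some C>0, p>0). If a function w̃: X → (0,∞) satisfies w̃(x) ≥ (1+λ)·C/(1+‖x‖^p) for all x outside some compact set K and some λ > 0, then w̃ is not a Hardy weight, i.e. the inequality ∑_{x,y} b(x,y)(f(x)-f(y))² ≥ ∑_x w̃(x) f(x)² fails for some finitely supported f. -/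
/-- If the supersolution Hardy weight `w_G` satisfies `w_G x ≤ C / (1 + ‖x‖^p)` and is
optimal near infinity, then any `w̃ > 0` with `w̃ x ≥ (1+λ) C / (1 + ‖x‖^p)` outside a
compact set `K` fails to be a Hardy weight. -/
theorem stmt_5 {X : Type*} [Countable X] [MetricSpace X] (b : X → X → ℝ)
    (hb_nonneg : ∀ x y, 0 ≤ b x y)
    (hb_symm : ∀ x y, b x y = b y x)
    (hb_diag : ∀ x, b x x = 0)
    (o : X) (wG : X → ℝ) (hwG_nonneg : ∀ x, 0 ≤ wG x)
    (C p : ℝ) (hC : 0 < C) (hp : 0 < p)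
    (hwG : ∀ x, wG x ≤ C / (1 + dist x o ^ p))
    (h_opt : ∀ lam : ℝ, 0 < lam → ∀ K : Set X, IsCompact K →
      ∃ f : X → ℝ, (Function.support f).Finite ∧ (∀ x ∈ K, f x = 0) ∧
        ¬ (∑' x, ENNReal.ofReal ((1 + lam) * wG x * f x ^ 2)
            ≤ ∑' q : X × X, ENNReal.ofReal (b q.1 q.2 * (f q.1 - f q.2) ^ 2)))
    (wt : X → ℝ) (hwt_pos : ∀ x, 0 < wt x)
    (lam : ℝ) (hlam : 0 < lam) (K : Set X) (hK : IsCompact K)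
    (hwt : ∀ x ∉ K, (1 + lam) * (C / (1 + dist x o ^ p)) ≤ wt x) :
    ¬ (∀ f : X → ℝ, (Function.support f).Finite →
        ∑' x, ENNReal.ofReal (wt x * f x ^ 2)
          ≤ ∑' q : X × X, ENNReal.ofReal (b q.1 q.2 * (f q.1 - f q.2) ^ 2)) := by
  intro H
  obtain ⟨f, hfin, hfK, hnot⟩ := h_opt lam hlam K hK
  apply hnot
  refine le_trans ?_ (H f hfin)
  apply ENNReal.tsum_le_tsum
  intro x
  apply ENNReal.ofReal_le_ofReal
  by_cases hx : x ∈ K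
  · simp [hfK x hx]
  · have h1 : (1 + lam) * wG x ≤ wt x := by
      calc (1 + lam) * wG x ≤ (1 + lam) * (C / (1 + dist x o ^ p)) := by
            apply mul_le_mul_of_nonneg_left (hwG x) (by linarith)
        _ ≤ wt x := hwt x hx
    exact mul_le_mul_of_nonneg_right h1 (sq_nonneg _)
end

section
/- For d ≥ 3 let G₀(x) = C_d ∑_{n≥0} P⁰(S_n = x) be the Green's function of the symmetric simple random walk on ℤ^d. Then G₀ is nowhere locally constant: for every x ∈ ℤ^d, ∑_{y ~ x} |G₀(x) − G₀(y)| > 0. -/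
/-- Standard basis vector `e_j` in `ℤ^d`. -/
def stdE (d : ℕ) (j : Fin d) : Fin d → ℤ := fun i => if i = j then 1 else 0

namespace Stmt16Aux

variable {d : ℕ}

/-- Reflection of coordinate `j`. -/
def rfl' (j : Fin d) (x : Fin d → ℤ) : Fin d → ℤ := fun i => if i = j then -x i else x i

lemma rfl'_eq_zero (j : Fin d) (x : Fin d → ℤ) : rfl' j x = 0 ↔ x = 0 := by
  constructor <;> intro h <;> funext i <;> have := congrFun h i <;>
    simp [rfl'] at * <;> by_cases hij : i = j <;> simp [hij] at * <;> omega

lemma rfl'_sub_self (j : Fin d) (x : Fin d → ℤ) :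
    rfl' j x - stdE d j = rfl' j (x + stdE d j) := by
  funext i; by_cases hij : i = j <;> simp [rfl', stdE, hij] <;> ring

lemma rfl'_add_self (j : Fin d) (x : Fin d → ℤ) :
    rfl' j x + stdE d j = rfl' j (x - stdE d j) := by
  funext i; by_cases hij : i = j <;> simp [rfl', stdE, hij] <;> ring

lemma rfl'_sub_ne (j i : Fin d) (hij : i ≠ j) (x : Fin d → ℤ) :
    rfl' j x - stdE d i = rfl' j (x - stdE d i) := by
  funext k
  simp only [rfl', stdE, Pi.sub_apply]
  by_cases hkj : k = j
  · subst hkj; simp [if_neg (fun h : k = i => hij h.symm), if_pos rfl]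
  · simp [hkj]

lemma rfl'_add_ne (j i : Fin d) (hij : i ≠ j) (x : Fin d → ℤ) :
    rfl' j x + stdE d i = rfl' j (x + stdE d i) := by
  funext k
  simp only [rfl', stdE, Pi.add_apply]
  by_cases hkj : k = j
  · subst hkj; simp [if_neg (fun h : k = i => hij h.symm), if_pos rfl]
  · simp [hkj]

/-- The ℓ¹ norm on `ℤ^d`. -/
def nrm (x : Fin d → ℤ) : ℕ := ∑ i, (x i).natAbs

lemma nrm_erase (x : Fin d → ℤ) (j : Fin d) :
    nrm x = (∑ i ∈ Finset.univ.erase j, (x i).natAbs) + (x j).natAbs :=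
  (Finset.sum_erase_add _ _ (Finset.mem_univ j)).symm

lemma erase_sum_add (x : Fin d → ℤ) (j : Fin d) :
    ∑ i ∈ Finset.univ.erase j, (((x + stdE d j)) i).natAbs
      = ∑ i ∈ Finset.univ.erase j, (x i).natAbs :=
  Finset.sum_congr rfl fun i hi => by
    have h : i ≠ j := Finset.ne_of_mem_erase hi
    simp [stdE, h]

lemma erase_sum_sub (x : Fin d → ℤ) (j : Fin d) :
    ∑ i ∈ Finset.univ.erase j, (((x - stdE d j)) i).natAbs
      = ∑ i ∈ Finset.univ.erase j, (x i).natAbs :=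
  Finset.sum_congr rfl fun i hi => by
    have h : i ≠ j := Finset.ne_of_mem_erase hi
    simp [stdE, h]

lemma apply_add (x : Fin d → ℤ) (j : Fin d) : (x + stdE d j) j = x j + 1 := by
  simp [stdE]

lemma apply_sub (x : Fin d → ℤ) (j : Fin d) : (x - stdE d j) j = x j - 1 := by
  simp [stdE]

section P

variable (p : ℕ → (Fin d → ℤ) → ℝ)

lemma p_nonneg (hp0 : ∀ x, p 0 x = if x = 0 then 1 else 0)
    (hpstep : ∀ n x, p (n + 1) x =
      (1/(2*(d:ℝ))) * ∑ j : Fin d, (p n (x - stdE d j) + p n (x + stdE d j)))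
    (n : ℕ) : ∀ x, 0 ≤ p n x := by
  induction n with
  | zero => intro x; rw [hp0]; split <;> norm_num
  | succ n ih =>
    intro x; rw [hpstep]
    exact mul_nonneg (by positivity)
      (Finset.sum_nonneg fun j _ => add_nonneg (ih _) (ih _))

lemma p_refl (hp0 : ∀ x, p 0 x = if x = 0 then 1 else 0)
    (hpstep : ∀ n x, p (n + 1) x =
      (1/(2*(d:ℝ))) * ∑ j : Fin d, (p n (x - stdE d j) + p n (x + stdE d j)))
    (n : ℕ) : ∀ x j, p n (rfl' j x) = p n x := by
  induction n with
  | zero => intro x j; rw [hp0, hp0]; simp [rfl'_eq_zero]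
  | succ n ih =>
    intro x j
    rw [hpstep, hpstep]
    congr 1
    apply Finset.sum_congr rfl
    intro i _
    by_cases hij : i = j
    · subst hij; rw [rfl'_sub_self, rfl'_add_self, ih, ih, add_comm]
    · rw [rfl'_sub_ne j i hij, rfl'_add_ne j i hij, ih, ih]

lemma p_mono (hp0 : ∀ x, p 0 x = if x = 0 then 1 else 0)
    (hpstep : ∀ n x, p (n + 1) x =
      (1/(2*(d:ℝ))) * ∑ j : Fin d, (p n (x - stdE d j) + p n (x + stdE d j)))
    (n : ℕ) : ∀ (x : Fin d → ℤ) j, 0 ≤ x j →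
      p n (x + stdE d j + stdE d j) ≤ p n x := by
  induction n with
  | zero =>
    intro x j hx
    rw [hp0, hp0, if_neg]
    · split <;> norm_num
    · intro h; have := congrFun h j; simp [stdE] at this; omega
  | succ n ih =>
    intro x j hx
    rw [hpstep, hpstep]
    apply mul_le_mul_of_nonneg_left _ (by positivity)
    apply Finset.sum_le_sum
    intro i _
    by_cases hij : i = j
    · subst hij
      rw [show x + stdE d i + stdE d i - stdE d i = x + stdE d i by abel]
      have h1 : p n (x + stdE d i + stdE d i + stdE d i) ≤ p n (x + stdE d i) :=
        ih (x + stdE d i) i (by simp [stdE]; omega)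
      have h2 : p n (x + stdE d i) ≤ p n (x - stdE d i) := by
        rcases lt_or_eq_of_le hx with h | h
        · have := ih (x - stdE d i) i (by simp [stdE]; omega)
          rwa [show x - stdE d i + stdE d i + stdE d i = x + stdE d i by abel] at this
        · have hre : rfl' i (x - stdE d i) = x + stdE d i := by
            funext k; by_cases hk : k = i <;> simp [rfl', stdE, hk] <;> omega
          rw [← hre, p_refl p hp0 hpstep]
      linarith
    · rw [show x + stdE d j + stdE d j - stdE d i = (x - stdE d i) + stdE d j + stdE d j by abel,
          show x + stdE d j + stdE d j + stdE d i = (x + stdE d i) + stdE d j + stdE d j by abel]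
      have hc1 : 0 ≤ (x - stdE d i) j := by
        simp [stdE, if_neg (fun h : j = i => hij h.symm)]; omega
      have hc2 : 0 ≤ (x + stdE d i) j := by
        simp [stdE, if_neg (fun h : j = i => hij h.symm)]; omega
      exact add_le_add (ih _ _ hc1) (ih _ _ hc2)

lemma p_vanish (hp0 : ∀ x, p 0 x = if x = 0 then 1 else 0)
    (hpstep : ∀ n x, p (n + 1) x =
      (1/(2*(d:ℝ))) * ∑ j : Fin d, (p n (x - stdE d j) + p n (x + stdE d j)))
    (n : ℕ) : ∀ x, n < nrm x → p n x = 0 := by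
  induction n with
  | zero =>
    intro x h
    rw [hp0, if_neg]
    rintro rfl
    simp [nrm] at h
  | succ n ih =>
    intro x h
    rw [hpstep, Finset.sum_eq_zero, mul_zero]
    intro i _
    have e1 := nrm_erase x i
    have e2 := nrm_erase (x - stdE d i) i
    have e3 := nrm_erase (x + stdE d i) i
    rw [erase_sum_sub, apply_sub] at e2
    rw [erase_sum_add, apply_add] at e3
    have h2 : n < nrm (x - stdE d i) := by omega
    have h3 : n < nrm (x + stdE d i) := by omega
    rw [ih _ h2, ih _ h3, add_zero]

lemma p_pos (hd : 0 < d) (hp0 : ∀ x, p 0 x = if x = 0 then 1 else 0)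
    (hpstep : ∀ n x, p (n + 1) x =
      (1/(2*(d:ℝ))) * ∑ j : Fin d, (p n (x - stdE d j) + p n (x + stdE d j)))
    (hnn : ∀ n x, 0 ≤ p n x)
    (n : ℕ) : ∀ x, nrm x = n → 0 < p n x := by
  induction n with
  | zero =>
    intro x h
    have hx : x = 0 := by
      funext i
      have := (Finset.sum_eq_zero_iff.mp h) i (Finset.mem_univ i)
      simpa [Int.natAbs_eq_zero] using this
    rw [hp0, if_pos hx]; norm_num
  | succ n ih =>
    intro x h
    obtain ⟨j, hj⟩ : ∃ j, x j ≠ 0 := by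
      by_contra hc
      push_neg at hc
      have : nrm x = 0 := Finset.sum_eq_zero fun i _ => by simp [hc i]
      omega
    have hdR : (0:ℝ) < d := by exact_mod_cast hd
    rw [hpstep]
    apply mul_pos (by positivity)
    apply Finset.sum_pos'
    · exact fun i _ => add_nonneg (hnn _ _) (hnn _ _)
    · refine ⟨j, Finset.mem_univ j, ?_⟩
      have e1 := nrm_erase x j
      have e2 := nrm_erase (x - stdE d j) j
      have e3 := nrm_erase (x + stdE d j) j
      rw [erase_sum_sub, apply_sub] at e2
      rw [erase_sum_add, apply_add] at e3
      rcases lt_or_gt_of_ne hj with hneg | hpos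
      · have : nrm (x + stdE d j) = n := by omega
        exact add_pos_of_nonneg_of_pos (hnn _ _) (ih _ this)
      · have : nrm (x - stdE d j) = n := by omega
        exact add_pos_of_pos_of_nonneg (ih _ this) (hnn _ _)

end P

lemma abs_pair_pos {a b c : ℝ} (h : b ≠ c) : 0 < |a - b| + |a - c| := by
  have h1 : 0 < |b - c| := abs_pos.2 (sub_ne_zero.2 h)
  have h2 : |b - c| ≤ |a - b| + |a - c| := by
    calc |b - c| = |(b - a) + (a - c)| := by rw [show (b - a) + (a - c) = b - c by ring]
      _ ≤ |b - a| + |a - c| := abs_add_le _ _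
      _ = |a - b| + |a - c| := by rw [abs_sub_comm b a]
  linarith

end Stmt16Aux

open Stmt16Aux in
/-- The Green's function `G₀(x) = C_d ∑_{n ≥ 0} P⁰(S_n = x)` of the simple symmetric
random walk on `ℤ^d` is nowhere locally constant: for every `x`,
`∑_{y ~ x} |G₀(x) - G₀(y)| > 0`. Here `p n x = P⁰(S_n = x)` is characterized by the
random-walk recursion. -/
theorem stmt_16 (d : ℕ) (hd : 3 ≤ d)
    (p : ℕ → (Fin d → ℤ) → ℝ)
    (hp0 : ∀ x, p 0 x = if x = 0 then 1 else 0)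
    (hpstep : ∀ n x, p (n + 1) x =
      (1/(2*(d:ℝ))) * ∑ j : Fin d, (p n (x - stdE d j) + p n (x + stdE d j)))
    (hsum : ∀ x, Summable (fun n => p n x))
    (Cd : ℝ) (hCd : 0 < Cd) :
    ∀ x : Fin d → ℤ,
      0 < ∑ j : Fin d,
        (|Cd * ∑' n, p n x - Cd * ∑' n, p n (x + stdE d j)| +
         |Cd * ∑' n, p n x - Cd * ∑' n, p n (x - stdE d j)|) := by
  intro x
  have hdpos : 0 < d := by omega
  have hnn := p_nonneg p hp0 hpstep
  -- strict monotonicity of the Green's function along a coordinate direction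
  have hGlt : ∀ (y : Fin d → ℤ) (j : Fin d), 1 ≤ y j →
      (∑' n, p n (y + stdE d j)) < (∑' n, p n (y - stdE d j)) := by
    intro y j hy
    apply Summable.tsum_lt_tsum (i := nrm (y - stdE d j)) ?_ ?_ (hsum _) (hsum _)
    · intro n
      have := p_mono p hp0 hpstep n (y - stdE d j) j (by rw [apply_sub]; omega)
      rwa [show y - stdE d j + stdE d j + stdE d j = y + stdE d j by abel] at this
    · have e2 := nrm_erase (y - stdE d j) j
      have e3 := nrm_erase (y + stdE d j) j
      rw [erase_sum_sub, apply_sub] at e2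
      rw [erase_sum_add, apply_add] at e3
      have hv : p (nrm (y - stdE d j)) (y + stdE d j) = 0 :=
        p_vanish p hp0 hpstep _ _ (by omega)
      rw [hv]
      exact p_pos p hdpos hp0 hpstep hnn _ _ rfl
  have hrefl : ∀ (y : Fin d → ℤ) (j : Fin d),
      (∑' n, p n (rfl' j y)) = ∑' n, p n y :=
    fun y j => tsum_congr fun n => p_refl p hp0 hpstep n y j
  by_cases hx0 : x = 0
  · -- at the origin, use G(0) = 1 + G(0) if G were locally constant
    by_contra hcon
    push_neg at hcon
    have hsum0 : (∑ j : Fin d,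
        (|Cd * ∑' n, p n x - Cd * ∑' n, p n (x + stdE d j)| +
         |Cd * ∑' n, p n x - Cd * ∑' n, p n (x - stdE d j)|)) = 0 :=
      le_antisymm hcon (Finset.sum_nonneg fun j _ => add_nonneg (abs_nonneg _) (abs_nonneg _))
    have hterm := (Finset.sum_eq_zero_iff_of_nonneg
      (fun j _ => add_nonneg (abs_nonneg _) (abs_nonneg _))).mp hsum0
    have hEq : ∀ j : Fin d, (∑' n, p n (x + stdE d j)) = (∑' n, p n x) ∧
        (∑' n, p n (x - stdE d j)) = (∑' n, p n x) := by
      intro j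
      have ht := hterm j (Finset.mem_univ j)
      have ha := abs_nonneg (Cd * ∑' n, p n x - Cd * ∑' n, p n (x + stdE d j))
      have hb := abs_nonneg (Cd * ∑' n, p n x - Cd * ∑' n, p n (x - stdE d j))
      have ha0 : |Cd * ∑' n, p n x - Cd * ∑' n, p n (x + stdE d j)| = 0 := by linarith
      have hb0 : |Cd * ∑' n, p n x - Cd * ∑' n, p n (x - stdE d j)| = 0 := by linarith
      constructor
      · have := sub_eq_zero.mp (abs_eq_zero.mp ha0)
        exact (mul_left_cancel₀ hCd.ne' this).symm
      · have := sub_eq_zero.mp (abs_eq_zero.mp hb0)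
        exact (mul_left_cancel₀ hCd.ne' this).symm
    -- the recursion at the origin
    have e0 : (∑' n, p n x) = p 0 x + ∑' n, p (n+1) x := Summable.tsum_eq_zero_add (hsum x)
    have e1 : p 0 x = 1 := by rw [hp0, if_pos hx0]
    have e3 : (∑' n, p (n+1) x)
        = (1/(2*(d:ℝ))) * ∑' n, ∑ j : Fin d, (p n (x - stdE d j) + p n (x + stdE d j)) := by
      rw [show (fun n => p (n+1) x) = fun n =>
        (1/(2*(d:ℝ))) * ∑ j : Fin d, (p n (x - stdE d j) + p n (x + stdE d j))
        from funext fun n => hpstep n x]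
      exact tsum_mul_left
    have e4 : (∑' n, ∑ j : Fin d, (p n (x - stdE d j) + p n (x + stdE d j)))
        = ∑ j : Fin d, ((∑' n, p n (x - stdE d j)) + ∑' n, p n (x + stdE d j)) := by
      rw [Summable.tsum_finsetSum fun j _ => (hsum _).add (hsum _)]
      exact Finset.sum_congr rfl fun j _ => Summable.tsum_add (hsum _) (hsum _)
    have e5 : (∑ j : Fin d, ((∑' n, p n (x - stdE d j)) + ∑' n, p n (x + stdE d j)))
        = (d : ℝ) * (2 * ∑' n, p n x) := by
      calc (∑ j : Fin d, ((∑' n, p n (x - stdE d j)) + ∑' n, p n (x + stdE d j)))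
          = ∑ _j : Fin d, 2 * ∑' n, p n x :=
            Finset.sum_congr rfl fun j _ => by rw [(hEq j).1, (hEq j).2]; ring
        _ = (d : ℝ) * (2 * ∑' n, p n x) := by
            rw [Finset.sum_const, Finset.card_univ, Fintype.card_fin, nsmul_eq_mul]
    have hdR : (d:ℝ) ≠ 0 := by positivity
    have e6 : (∑' n, p (n+1) x) = ∑' n, p n x := by
      rw [e3, e4, e5]
      field_simp
    rw [e6, e1] at e0
    linarith
  · -- away from the origin, strict monotonicity gives a strict difference
    obtain ⟨j, hj⟩ : ∃ j, x j ≠ 0 := by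
      by_contra hc
      push_neg at hc
      exact hx0 (funext fun i => hc i)
    have hne : (∑' n, p n (x + stdE d j)) ≠ (∑' n, p n (x - stdE d j)) := by
      rcases lt_or_gt_of_ne hj with hneg | hpos
      · have hcoord : 1 ≤ rfl' j x j := by simp [rfl']; omega
        have hlt : (∑' n, p n (x - stdE d j)) < ∑' n, p n (x + stdE d j) := by
          calc (∑' n, p n (x - stdE d j))
              = ∑' n, p n (rfl' j x + stdE d j) := by
                rw [rfl'_add_self]; exact (hrefl _ j).symm
            _ < ∑' n, p n (rfl' j x - stdE d j) := hGlt _ j hcoord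
            _ = ∑' n, p n (x + stdE d j) := by
                rw [rfl'_sub_self]; exact hrefl _ j
        exact hlt.ne'
      · exact (hGlt x j (by omega)).ne
    have hne2 : Cd * (∑' n, p n (x + stdE d j)) ≠ Cd * ∑' n, p n (x - stdE d j) :=
      fun h => hne (mul_left_cancel₀ hCd.ne' h)
    apply Finset.sum_pos'
    · exact fun i _ => add_nonneg (abs_nonneg _) (abs_nonneg _)
    · exact ⟨j, Finset.mem_univ j, abs_pair_pos hne2⟩
end
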